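/- Let f : ℝⁿ → ℝ be convex and differentiable, x* a minimizer of f, p > 0, C > 0, ζ ≥ 1, and let X : (0,∞) → ℝⁿ be twice differentiable satisfying X''(t) + ((ζp+1)/t)·X'(t) + C·p²·t^(p-2)·∇f(X(t)) = 0. Define E(t) = C·t^p·(f(X(t)) − f(x*)) + ((ζ−1)/2)·‖x* − X(t)‖² + (1/2)·‖(t/p)·X'(t) + X(t) − x*‖². Then E'(t) ≤ 0 for all t > 0. -/

import Mathlib

/-!
Along the flow, `V = (t/p) X' + X - x*` has `V' = (1 - ζ) X' - C p t^(p-1) ∇f(X)`. With this the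
cross terms of `E'` cancel and
`E' = C p t^(p-1) (f(X) - f(x*) + ⟪∇f(X), x* - X⟫) - ((ζ - 1) t / p) ‖X'‖²`;
the first term is `≤ 0` by the gradient inequality of the convex function `f`, the second since
`ζ ≥ 1`.
-/

open Real Set
open scoped RealInnerProductSpace

theorem ConvexOn.hasFDerivAt_apply_sub_le {F : Type*} [NormedAddCommGroup F] [NormedSpace ℝ F]
    {s : Set F} {f : F → ℝ} {f' : F →L[ℝ] ℝ} {x y : F} (hconv : ConvexOn ℝ s f)
    (hx : x ∈ s) (hy : y ∈ s) (hf : HasFDerivAt f f' x) :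
    f' (y - x) ≤ f y - f x := by
  have hline : HasDerivAt (f ∘ AffineMap.lineMap x y) (f' (y - x)) (0 : ℝ) :=
    (by simpa using hf : HasFDerivAt f f' (AffineMap.lineMap x y (0 : ℝ))).comp_hasDerivAt _
      AffineMap.hasDerivAt_lineMap
  have hslope := (hconv.comp_affineMap (AffineMap.lineMap x y)).le_slope_of_hasDerivAt
    (x := 0) (y := 1) (by simpa using hx) (by simpa using hy) one_pos hline
  simpa [slope_def_field] using hslope

section BregmanFlow

variable {E : Type*} [NormedAddCommGroup E] [InnerProductSpace ℝ E]

theorem ConvexOn.inner_gradient_sub_le [CompleteSpace E] {s : Set E} {f : E → ℝ} {x y : E}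
    (hconv : ConvexOn ℝ s f) (hx : x ∈ s) (hy : y ∈ s) (hf : DifferentiableAt ℝ f x) :
    ⟪gradient f x, y - x⟫ ≤ f y - f x := by
  rw [inner_gradient_left]
  exact hconv.hasFDerivAt_apply_sub_le hx hy hf.hasFDerivAt

theorem hasDerivAt_div_smul_add_sub_of_ode {X X' X'' : ℝ → E} {xstar g : E} {p C ζ t : ℝ}
    (hp : p ≠ 0) (ht : t ≠ 0) (hX : HasDerivAt X (X' t) t) (hX' : HasDerivAt X' (X'' t) t)
    (hode : X'' t + ((ζ * p + 1) / t) • X' t + (C * p ^ 2 * t ^ (p - 2)) • g = 0) :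
    HasDerivAt (fun s => (s / p) • X' s + X s - xstar)
      ((1 - ζ) • X' t - (C * p * t ^ (p - 1)) • g) t := by
  have hv : 1 / p + 1 - t / p * ((ζ * p + 1) / t) = 1 - ζ := by field_simp; ring
  have hg : t / p * (C * p ^ 2 * t ^ (p - 2)) = C * p * t ^ (p - 1) := by
    rw [show p - 1 = p - 2 + 1 by ring, rpow_add_one ht]; field_simp
  have hV' : (t / p) • X'' t + (1 / p) • X' t + X' t
      = (1 - ζ) • X' t - (C * p * t ^ (p - 1)) • g := by
    linear_combination (norm := skip) (t / p) • hode
    rw [← hv, ← hg]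
    module
  rw [← hV']
  simpa using ((((hasDerivAt_id t).div_const p).smul hX').add hX).sub_const xstar

noncomputable def bregmanLyapunov (f : E → ℝ) (xstar : E) (p C ζ : ℝ) (X X' : ℝ → E) (s : ℝ) :
    ℝ :=
  C * s ^ p * (f (X s) - f xstar) + ((ζ - 1) / 2) * ‖xstar - X s‖ ^ 2
    + (1/2) * ‖(s / p) • X' s + X s - xstar‖ ^ 2

theorem hasDerivAt_bregmanLyapunov [CompleteSpace E] {f : E → ℝ} {xstar : E} {p C ζ t : ℝ}
    {X X' X'' : ℝ → E} (hp : p ≠ 0) (ht : t ≠ 0) (hf : DifferentiableAt ℝ f (X t))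
    (hX : HasDerivAt X (X' t) t) (hX' : HasDerivAt X' (X'' t) t)
    (hode : X'' t + ((ζ * p + 1) / t) • X' t + (C * p ^ 2 * t ^ (p - 2)) • gradient f (X t) = 0) :
    HasDerivAt (bregmanLyapunov f xstar p C ζ X X')
      (C * p * t ^ (p - 1) * (f (X t) - f xstar + ⟪gradient f (X t), xstar - X t⟫)
        - (ζ - 1) * t / p * ‖X' t‖ ^ 2) t := by
  have hfX : HasDerivAt (fun s => f (X s)) (fderiv ℝ f (X t) (X' t)) t :=
    hf.hasFDerivAt.comp_hasDerivAt t hX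
  have hV := hasDerivAt_div_smul_add_sub_of_ode (xstar := xstar) hp ht hX hX' hode
  refine ((((hasDerivAt_rpow_const (Or.inl ht)).const_mul C).mul (hfX.sub_const (f xstar))).add
    ((hX.const_sub xstar).norm_sq.const_mul ((ζ - 1) / 2))).add
    (hV.norm_sq.const_mul (1 / 2)) |>.congr_deriv ?_
  have hpow : t ^ p = t ^ (p - 1) * t := by rw [← rpow_add_one ht, sub_add_cancel]
  rw [hpow, add_sub_assoc, ← inner_gradient_left, ← neg_sub (X t) xstar]
  generalize X t - xstar = y
  simp only [inner_add_left, inner_sub_right, inner_neg_right, real_inner_smul_left,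
    real_inner_smul_right, real_inner_self_eq_norm_sq, real_inner_comm (X' t),
    real_inner_comm (gradient f (X t)) y]
  field_simp
  ring

end BregmanFlow

theorem lyapunov_decreasing_convex_general {n : ℕ}
    (f : EuclideanSpace ℝ (Fin n) → ℝ) (hf : Differentiable ℝ f)
    (hconv : ConvexOn ℝ Set.univ f)
    (xstar : EuclideanSpace ℝ (Fin n))
    (p C ζ : ℝ) (hp : 0 < p) (hC : 0 < C) (hζ : 1 ≤ ζ)
    (X X' X'' : ℝ → EuclideanSpace ℝ (Fin n))
    (hX : ∀ t > (0:ℝ), HasDerivAt X (X' t) t)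
    (hX' : ∀ t > (0:ℝ), HasDerivAt X' (X'' t) t)
    (hode : ∀ t > (0:ℝ),
      X'' t + ((ζ * p + 1) / t) • X' t + (C * p ^ 2 * t ^ (p - 2)) • gradient f (X t) = 0) :
    ∀ t > (0:ℝ), ∀ d : ℝ,
      HasDerivAt (fun s => C * s ^ p * (f (X s) - f xstar)
          + ((ζ - 1) / 2) * ‖xstar - X s‖ ^ 2
          + (1/2) * ‖(s / p) • X' s + X s - xstar‖ ^ 2) d t →
      d ≤ 0 := by
  intro t ht d hd
  rw [hd.unique (hasDerivAt_bregmanLyapunov hp.ne' ht.ne' (hf (X t))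
    (hX t ht) (hX' t ht) (hode t ht))]
  have hgap : f (X t) - f xstar + ⟪gradient f (X t), xstar - X t⟫ ≤ 0 := by
    linarith [hconv.inner_gradient_sub_le (mem_univ (X t)) (mem_univ xstar) (hf (X t))]
  have hdamping : 0 ≤ (ζ - 1) * t / p * ‖X' t‖ ^ 2 := by
    have := sub_nonneg.2 hζ
    positivity
  linarith [mul_nonpos_of_nonneg_of_nonpos (by positivity : 0 ≤ C * p * t ^ (p - 1)) hgap]

/-- Monotonicity of the Lyapunov function for the convex p-Bregman flow in ℝⁿ. -/
theorem lyapunov_decreasing_convex {n : ℕ}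
    (f : EuclideanSpace ℝ (Fin n) → ℝ) (hf : Differentiable ℝ f)
    (hconv : ConvexOn ℝ Set.univ f)
    (xstar : EuclideanSpace ℝ (Fin n)) (hmin : ∀ y, f xstar ≤ f y)
    (p C ζ : ℝ) (hp : 0 < p) (hC : 0 < C) (hζ : 1 ≤ ζ)
    (X X' X'' : ℝ → EuclideanSpace ℝ (Fin n))
    (hX : ∀ t > (0:ℝ), HasDerivAt X (X' t) t)
    (hX' : ∀ t > (0:ℝ), HasDerivAt X' (X'' t) t)
    (hode : ∀ t > (0:ℝ),
      X'' t + ((ζ * p + 1) / t) • X' t + (C * p ^ 2 * t ^ (p - 2)) • gradient f (X t) = 0) :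
    ∀ t > (0:ℝ), ∀ d : ℝ,
      HasDerivAt (fun s => C * s ^ p * (f (X s) - f xstar)
          + ((ζ - 1) / 2) * ‖xstar - X s‖ ^ 2
          + (1/2) * ‖(s / p) • X' s + X s - xstar‖ ^ 2) d t →
      d ≤ 0 :=
  lyapunov_decreasing_convex_general f hf hconv xstar p C ζ hp hC hζ X X' X'' hX hX' hode
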